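/- arXiv:2403.19764 — 2 statements merged into one kernel-verified Lean document; each statement's English description precedes it below -/
import Mathlib

section
/- Let P be a unital subsemigroup of a discrete group G and let V_p denote the left creation isometries on ℓ²(P), (V_p δ_s = δ_{ps}). For a constructible ideal x = q_n⁻¹p_n ⋯ q_1⁻¹p_1 P with p_1⁻¹q_1 ⋯ p_n⁻¹q_n = e in G, the operator V_{p_1}* V_{q_1} ⋯ V_{p_n}* V_{q_n} equals the orthogonal projection onto the closed span of {δ_p : p ∈ x} in ℓ²(P). -/
open scoped Classical

/-- `qₙ⁻¹pₙ ⋯ q₁⁻¹p₁ Z` for `L = [(p₁,q₁), …, (pₙ,qₙ)]`, inside the monoid `M`. -/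
def sgWordT {M : Type*} [Monoid M] (L : List (M × M)) (Z : Set M) : Set M :=
  L.foldl (fun Z pq => (pq.2 * ·) ⁻¹' ((pq.1 * ·) '' Z)) Z

section aux

variable {G : Type*} [Group G] (P : Submonoid G)

noncomputable abbrev sgDelta (s : ↥P) : lp (fun _ : ↥P => ℂ) 2 := lp.single 2 s (1 : ℂ)

lemma sgDense :
    Dense (↑(Submodule.span ℂ (Set.range (sgDelta P))) : Set (lp (fun _ : ↥P => ℂ) 2)) := by
  intro f
  have h := lp.hasSum_single (E := fun _ : ↥P => ℂ) (p := 2) (by norm_num) f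
  refine mem_closure_of_tendsto h (Filter.Eventually.of_forall fun n => ?_)
  refine Submodule.sum_mem _ fun i _ => ?_
  have : lp.single 2 i (f i : ℂ) = (f i : ℂ) • sgDelta P i := by
    rw [← lp.single_smul]
    congr 1
    simp
  rw [this]
  exact Submodule.smul_mem _ _ (Submodule.subset_span ⟨i, rfl⟩)

lemma sgDelta_apply (s u : ↥P) : (sgDelta P s : ∀ _ : ↥P, ℂ) u = if u = s then 1 else 0 := by
  split_ifs with h
  · subst h; exact lp.single_apply_self _ _ _
  · exact lp.single_apply_ne _ _ _ h

lemma sgCancel {p u v : ↥P} (h : p * u = p * v) : u = v := by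
  apply Subtype.ext
  have h2 : (p : G) * (u : G) = (p : G) * (v : G) := by exact_mod_cast congrArg Subtype.val h
  exact mul_left_cancel h2

variable (V : ↥P → (lp (fun _ : ↥P => ℂ) 2 →L[ℂ] lp (fun _ : ↥P => ℂ) 2))
  (hV : ∀ p s : ↥P, V p (lp.single 2 s (1 : ℂ)) = lp.single 2 (p * s) (1 : ℂ))

include hV

lemma sgAdj_apply (p : ↥P) (f : lp (fun _ : ↥P => ℂ) 2) (u : ↥P) :
    ((ContinuousLinearMap.adjoint (V p)) f : ∀ _ : ↥P, ℂ) u = f (p * u) := by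
  have h1 : ((ContinuousLinearMap.adjoint (V p)) f : ∀ _ : ↥P, ℂ) u
      = @inner ℂ _ _ (sgDelta P u) ((ContinuousLinearMap.adjoint (V p)) f) := by
    rw [lp.inner_single_left]
    simp
  rw [h1, ContinuousLinearMap.adjoint_inner_right, hV, lp.inner_single_left]
  simp

set_option maxHeartbeats 1000000 in
lemma sgMain (L : List (↥P × ↥P)) (s : ↥P) :
    (s ∈ sgWordT L Set.univ → ∃ t : ↥P,
      (t : G) = ((L.map fun pq => ((pq.1 : G))⁻¹ * (pq.2 : G)).prod) * (s : G) ∧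
      (L.map fun pq => (ContinuousLinearMap.adjoint (V pq.1)) * V pq.2).prod (sgDelta P s)
        = sgDelta P t) ∧
    (s ∉ sgWordT L Set.univ →
      (L.map fun pq => (ContinuousLinearMap.adjoint (V pq.1)) * V pq.2).prod (sgDelta P s)
        = 0) := by
  induction L using List.reverseRecOn generalizing s with
  | nil =>
    constructor
    · intro _
      exact ⟨s, by simp, by simp⟩
    · intro hs
      exact absurd (Set.mem_univ s) hs
  | append_singleton L pq ih =>
    have hset : sgWordT (L ++ [pq]) (Set.univ : Set ↥P)
        = (pq.2 * ·) ⁻¹' ((pq.1 * ·) '' (sgWordT L Set.univ)) := by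
      simp [sgWordT, List.foldl_append]
    have hop : (((L ++ [pq]).map fun pq =>
          (ContinuousLinearMap.adjoint (V pq.1)) * V pq.2).prod) (sgDelta P s)
        = ((L.map fun pq => (ContinuousLinearMap.adjoint (V pq.1)) * V pq.2).prod)
          ((ContinuousLinearMap.adjoint (V pq.1)) (V pq.2 (sgDelta P s))) := by
      rw [List.map_append, List.prod_append]
      simp [ContinuousLinearMap.mul_apply]
    have hVs : V pq.2 (sgDelta P s) = sgDelta P (pq.2 * s) := hV _ _
    constructor
    · intro hs
      rw [hset] at hs
      obtain ⟨t, htL, htp⟩ := hs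
      have hadj : (ContinuousLinearMap.adjoint (V pq.1)) (sgDelta P (pq.2 * s))
          = sgDelta P t := by
        have htp' : pq.1 * t = pq.2 * s := htp
        apply lp.ext
        funext u
        rw [sgAdj_apply P V hV, sgDelta_apply, sgDelta_apply]
        have hiff : pq.1 * u = pq.2 * s ↔ u = t := by
          constructor
          · intro h
            exact sgCancel P (h.trans htp'.symm)
          · intro h; rw [h, htp']
        simp only [hiff]
      obtain ⟨t', ht'1, ht'2⟩ := (ih t).1 htL
      refine ⟨t', ?_, ?_⟩
      · have htG : (t : G) = ((pq.1 : G))⁻¹ * (pq.2 : G) * (s : G) := by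
          have : (pq.1 : G) * (t : G) = (pq.2 : G) * (s : G) := by
            exact_mod_cast congrArg (Subtype.val) htp
          rw [mul_assoc, ← this, ← mul_assoc, inv_mul_cancel, one_mul]
        rw [List.map_append, List.prod_append, ht'1, htG]
        simp [mul_assoc]
      · rw [hop, hVs, hadj, ht'2]
    · intro hs
      rw [hset] at hs
      rw [hop, hVs]
      by_cases hex : ∃ u : ↥P, pq.1 * u = pq.2 * s
      · obtain ⟨u, hu⟩ := hex
        have hadj : (ContinuousLinearMap.adjoint (V pq.1)) (sgDelta P (pq.2 * s))
            = sgDelta P u := by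
          apply lp.ext
          funext w
          rw [sgAdj_apply P V hV, sgDelta_apply, sgDelta_apply]
          have hiff : pq.1 * w = pq.2 * s ↔ w = u := by
            constructor
            · intro h
              exact sgCancel P (h.trans hu.symm)
            · intro h; rw [h, hu]
          simp only [hiff]
        have huL : u ∉ sgWordT L Set.univ := fun huL => hs ⟨u, huL, hu⟩
        rw [hadj, (ih u).2 huL]
      · have hadj : (ContinuousLinearMap.adjoint (V pq.1)) (sgDelta P (pq.2 * s)) = 0 := by
          apply lp.ext
          funext w
          rw [sgAdj_apply P V hV, sgDelta_apply]
          have : ¬ (pq.1 * w = pq.2 * s) := fun h => hex ⟨w, h⟩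
          rw [if_neg this, lp.coeFn_zero, Pi.zero_apply]
        rw [hadj, map_zero]

end aux

set_option maxHeartbeats 1000000 in
set_option synthInstance.maxHeartbeats 1000000 in
/-- For a constructible ideal `x = qₙ⁻¹pₙ ⋯ q₁⁻¹p₁ P` with `p₁⁻¹q₁ ⋯ pₙ⁻¹qₙ = e` in `G`,
the operator `V_{p₁}* V_{q₁} ⋯ V_{pₙ}* V_{qₙ}` on `ℓ²(P)` equals the orthogonal projection
`E_[x]` onto the closed span of `{δ_p : p ∈ x}` (the diagonal cut-off by `x`). -/
theorem stmt11 {G : Type*} [Group G] (P : Submonoid G)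
    (V : ↥P → (lp (fun _ : ↥P => ℂ) 2 →L[ℂ] lp (fun _ : ↥P => ℂ) 2))
    (hV : ∀ p s : ↥P, V p (lp.single 2 s (1 : ℂ)) = lp.single 2 (p * s) (1 : ℂ))
    (L : List (↥P × ↥P))
    (hneutral : (L.map fun pq => ((pq.1 : G))⁻¹ * (pq.2 : G)).prod = 1)
    (E : lp (fun _ : ↥P => ℂ) 2 →L[ℂ] lp (fun _ : ↥P => ℂ) 2)
    (hE : ∀ (f : lp (fun _ : ↥P => ℂ) 2) (s : ↥P),
      (E f : ∀ _ : ↥P, ℂ) s = Set.indicator (sgWordT L Set.univ) (⇑f) s) :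
    (L.map fun pq => (ContinuousLinearMap.adjoint (V pq.1)) * V pq.2).prod = E := by
  refine ContinuousLinearMap.ext_on (sgDense P) ?_
  rintro x ⟨s, rfl⟩
  by_cases hs : s ∈ sgWordT L Set.univ
  · obtain ⟨t, ht1, ht2⟩ := (sgMain P V hV L s).1 hs
    have hts : t = s := by
      apply Subtype.ext
      rw [ht1, hneutral, one_mul]
    rw [ht2, hts]
    apply lp.ext
    funext u
    rw [hE, sgDelta_apply]
    by_cases hu : u ∈ sgWordT L Set.univ
    · rw [Set.indicator_of_mem hu, sgDelta_apply]
    · rw [Set.indicator_of_notMem hu]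
      have : u ≠ s := fun h => hu (h ▸ hs)
      simp [this]
  · rw [(sgMain P V hV L s).2 hs]
    apply lp.ext
    funext u
    rw [hE, lp.coeFn_zero]
    by_cases hu : u ∈ sgWordT L Set.univ
    · rw [Set.indicator_of_mem hu, sgDelta_apply]
      have : u ≠ s := fun h => hs (h ▸ hu)
      simp [this]
    · rw [Set.indicator_of_notMem hu]
      rfl
end

section
/- Let w : P → B(H) be an isometric representation of a unital subsemigroup P of a group G (each w_p an isometry, w multiplicative, w_e = 1). For a word α = (p_1, q_1, ..., p_n, q_n) with K(α) := q_n⁻¹p_n⋯q_1⁻¹p_1 P ≠ ∅, and any r ∈ K(α), one has ẇ_α w_r = w_{p_1⁻¹q_1⋯p_n⁻¹q_n r}, where ẇ_α := w_{p_1}* w_{q_1} ⋯ w_{p_n}* w_{q_n}; in particular if α is neutral (p_1⁻¹q_1⋯p_n⁻¹q_n = e) then ẇ_α w_r = w_r for all r ∈ K(α). -/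
/-- Key inductive lemma: for `r ∈ sgWordT L Z`, the element `(∏ pᵢ⁻¹qᵢ) r` lies in
`P` (indeed in `Z`) and `ẇ_α w_r = w_{(∏ pᵢ⁻¹qᵢ) r}`. -/
theorem sgAux {G : Type*} [Group G] (P : Submonoid G)
    {H : Type*} [NormedAddCommGroup H] [InnerProductSpace ℂ H] [CompleteSpace H]
    (w : ↥P → (H →L[ℂ] H))
    (hmul : ∀ p q : ↥P, w p * w q = w (p * q))
    (hiso : ∀ p : ↥P, star (w p) * w p = 1) :
    ∀ (L : List (↥P × ↥P)) (Z : Set ↥P) (r : ↥P), r ∈ sgWordT L Z →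
      ∃ h : (L.map fun pq => ((pq.1 : G))⁻¹ * (pq.2 : G)).prod * (r : G) ∈ P,
        (⟨_, h⟩ : ↥P) ∈ Z ∧
        (L.map fun pq => star (w pq.1) * w pq.2).prod * w r
          = w ⟨(L.map fun pq => ((pq.1 : G))⁻¹ * (pq.2 : G)).prod * (r : G), h⟩ := by
  intro L
  induction L with
  | nil =>
    intro Z r hr
    refine ⟨by simpa using r.2, by simpa [sgWordT] using hr, ?_⟩
    simp only [List.map_nil, List.prod_nil, one_mul]
  | cons pq L ih =>
    intro Z r hr
    obtain ⟨h, hsZ, hop⟩ := ih ((pq.2 * ·) ⁻¹' ((pq.1 * ·) '' Z)) r hr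
    obtain ⟨z, hzZ, hz⟩ := hsZ
    have hz' : pq.1 * z = pq.2 * ⟨(L.map fun pq => ((pq.1 : G))⁻¹ * (pq.2 : G)).prod * (r : G), h⟩ := hz
    have hzG : (pq.1 : G) * (z : G) = (pq.2 : G) * ((L.map fun pq => ((pq.1 : G))⁻¹ * (pq.2 : G)).prod * (r : G)) := by
      simpa using congrArg Subtype.val hz'
    have hG : ((pq :: L).map fun pq => ((pq.1 : G))⁻¹ * (pq.2 : G)).prod * (r : G) = (z : G) := by
      simp only [List.map_cons, List.prod_cons]
      rw [mul_assoc, mul_assoc, ← hzG]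
      group
    have hmem : ((pq :: L).map fun pq => ((pq.1 : G))⁻¹ * (pq.2 : G)).prod * (r : G) ∈ P := hG ▸ z.2
    have heq : (⟨_, hmem⟩ : ↥P) = z := Subtype.ext hG
    refine ⟨hmem, heq ▸ hzZ, ?_⟩
    simp only [List.map_cons, List.prod_cons]
    rw [mul_assoc, mul_assoc, hop, hmul, ← hz', ← hmul, ← mul_assoc, hiso, one_mul]
    exact congrArg w heq.symm

/-- For an isometric representation `w` of `P ⊆ G` on a Hilbert space and a word
`α = (p₁, q₁, …, pₙ, qₙ)` with `K(α) ≠ ∅`: for all `r ∈ K(α)` one has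
`ẇ_α w_r = w_{p₁⁻¹q₁⋯pₙ⁻¹qₙ r}` (where `ẇ_α = w_{p₁}* w_{q₁} ⋯ w_{pₙ}* w_{qₙ}`);
in particular `ẇ_α w_r = w_r` when `α` is neutral. -/
theorem stmt16 {G : Type*} [Group G] (P : Submonoid G)
    {H : Type*} [NormedAddCommGroup H] [InnerProductSpace ℂ H] [CompleteSpace H]
    (w : ↥P → (H →L[ℂ] H))
    (hone : w 1 = 1)
    (hmul : ∀ p q : ↥P, w p * w q = w (p * q))
    (hiso : ∀ p : ↥P, star (w p) * w p = 1)
    (L : List (↥P × ↥P))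
    (hKne : (sgWordT L Set.univ).Nonempty) :
    (∀ r ∈ sgWordT L Set.univ,
      ∃ h : (L.map fun pq => ((pq.1 : G))⁻¹ * (pq.2 : G)).prod * (r : G) ∈ P,
        (L.map fun pq => star (w pq.1) * w pq.2).prod * w r
          = w ⟨(L.map fun pq => ((pq.1 : G))⁻¹ * (pq.2 : G)).prod * (r : G), h⟩) ∧
    ((L.map fun pq => ((pq.1 : G))⁻¹ * (pq.2 : G)).prod = 1 →
      ∀ r ∈ sgWordT L Set.univ,
        (L.map fun pq => star (w pq.1) * w pq.2).prod * w r = w r) := by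
  constructor
  · intro r hr
    obtain ⟨h, _, hop⟩ := sgAux P w hmul hiso L Set.univ r hr
    exact ⟨h, hop⟩
  · intro hneut r hr
    obtain ⟨h, _, hop⟩ := sgAux P w hmul hiso L Set.univ r hr
    rw [hop]
    congr 1
    exact Subtype.ext (by simp [hneut])
end
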